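/- For every integer k ≥ 3, no vertex guard set of the office-like polygon P_k that contains a guard at a vertex shared by a corridor and one of the rooms R_2, …, R_{k−1} achieves a dispersion distance of 4k + 1; consequently, every vertex guard set of P_k attaining the maximum dispersion distance has cardinality at least 2k − 2. -/

import Mathlib

open Set
open scoped ENNReal

noncomputable section

/-- The plane, equipped with the `L¹` metric. -/
abbrev Plane : Type := WithLp 1 (ℝ × ℝ)

namespace DispersiveAGP

noncomputable instance : DecidableEq Plane := Classical.decEq _

/-- The `x`-coordinate of a point of the plane. -/
def px (p : Plane) : ℝ := (WithLp.equiv 1 (ℝ × ℝ) p).1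

/-- The `y`-coordinate of a point of the plane. -/
def py (p : Plane) : ℝ := (WithLp.equiv 1 (ℝ × ℝ) p).2

/-- The point of the plane with the given coordinates. -/
def pt (a b : ℝ) : Plane := (WithLp.equiv 1 (ℝ × ℝ)).symm (a, b)

/-- Data of an axis-parallel rectangle. -/
structure Rect where
  x1 : ℝ
  x2 : ℝ
  y1 : ℝ
  y2 : ℝ

noncomputable instance : DecidableEq Rect := Classical.decEq _

/-- The closed rectangle, as a set of points of the plane. -/
def Rect.toSet (R : Rect) : Set Plane :=
  {p | R.x1 ≤ px p ∧ px p ≤ R.x2 ∧ R.y1 ≤ py p ∧ py p ≤ R.y2}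

/-- The open rectangle. -/
def Rect.interiorSet (R : Rect) : Set Plane :=
  {p | R.x1 < px p ∧ px p < R.x2 ∧ R.y1 < py p ∧ py p < R.y2}

/-- The rectangle is nondegenerate. -/
def Rect.Nondegenerate (R : Rect) : Prop := R.x1 < R.x2 ∧ R.y1 < R.y2

/-- `p` and `q` r-see each other within the region `S`: the closed axis-parallel
rectangle with opposite corners `p` and `q` is contained in `S`. -/
def RSee (S : Set Plane) (p q : Plane) : Prop :=
  {r : Plane | min (px p) (px q) ≤ px r ∧ px r ≤ max (px p) (px q) ∧
      min (py p) (py q) ≤ py r ∧ py r ≤ max (py p) (py q)} ⊆ S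

/-- A vertex of (the boundary of) the region `S`: a boundary point such that in no
neighborhood of it is the boundary contained in a single line. -/
def IsVertex (S : Set Plane) (v : Plane) : Prop :=
  v ∈ frontier S ∧
    ∀ ε > (0 : ℝ), ¬ ∃ a b c : ℝ, (a ≠ 0 ∨ b ≠ 0) ∧
      ∀ q ∈ frontier S ∩ Metric.ball v ε, a * px q + b * py q = c

/-- A vertex guard set of the region `S`, under r-visibility. -/
def IsGuardSet (S : Set Plane) (G : Finset Plane) : Prop :=
  (∀ g ∈ G, IsVertex S g) ∧ ∀ p ∈ S, ∃ g ∈ G, RSee S g p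

/-- Geodesic `L¹`-distance within `S`: the infimum of `L¹`-lengths (total variations
with respect to the `L¹` metric) of paths from `p` to `q` that stay inside `S`. -/
def geodesic (S : Set Plane) (p q : Plane) : ℝ≥0∞ :=
  ⨅ (γ : Path p q) (_ : Set.range (fun t => γ t) ⊆ S),
    eVariationOn (fun t => γ t) Set.univ

/-- The dispersion distance of a guard set `G` within region `S`: the minimum geodesic
`L¹`-distance between two distinct guards. -/
def dispersion (S : Set Plane) (G : Finset Plane) : ℝ≥0∞ :=
  ⨅ (g ∈ G) (g' ∈ G) (_ : g ≠ g'), geodesic S g g'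

/-- The guard set `G` has dispersion distance at least `ℓ`. -/
def DispersionAtLeast (S : Set Plane) (G : Finset Plane) (ℓ : ℝ≥0∞) : Prop :=
  ∀ g ∈ G, ∀ g' ∈ G, g ≠ g' → ℓ ≤ geodesic S g g'

/-- `G` is a vertex guard set attaining the maximum possible dispersion distance. -/
def AttainsMaxDispersion (S : Set Plane) (G : Finset Plane) : Prop :=
  IsGuardSet S G ∧ ∀ G' : Finset Plane, IsGuardSet S G' → dispersion S G' ≤ dispersion S G

/-- The horizontal corridor `C` connects the room `R1` (on its left) with the room `R2`
(on its right): the two vertical sides of `C` are strictly contained in the relative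
interiors of the corresponding vertical edges of `R1` resp. `R2`. -/
def ConnectsH (C R1 R2 : Rect) : Prop :=
  R1.x2 = C.x1 ∧ C.x2 = R2.x1 ∧
  R1.y1 < C.y1 ∧ C.y2 < R1.y2 ∧ R2.y1 < C.y1 ∧ C.y2 < R2.y2

/-- The vertical corridor `C` connects the room `R1` (below) with the room `R2` (above). -/
def ConnectsV (C R1 R2 : Rect) : Prop :=
  R1.y2 = C.y1 ∧ C.y2 = R2.y1 ∧
  R1.x1 < C.x1 ∧ C.x2 < R1.x2 ∧ R2.x1 < C.x1 ∧ C.x2 < R2.x2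

/-- The corridor `C` connects the rooms `R1` and `R2`. -/
def Connects (C R1 R2 : Rect) : Prop := ConnectsH C R1 R2 ∨ ConnectsV C R1 R2

/-- An office-like polygon: a connected union of rectangular rooms linked by
rectangular corridors, each corridor connecting exactly two rooms and being strictly
narrower than both of them. -/
structure OfficePolygon where
  rooms : Finset Rect
  corridors : Finset Rect
  rooms_nonempty : rooms.Nonempty
  nondeg_rooms : ∀ R ∈ rooms, R.Nondegenerate
  nondeg_corridors : ∀ C ∈ corridors, C.Nondegenerate
  connects : ∀ C ∈ corridors, ∃ R1 ∈ rooms, ∃ R2 ∈ rooms, R1 ≠ R2 ∧ Connects C R1 R2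
  corridor_room_disjoint : ∀ C ∈ corridors, ∀ R ∈ rooms, C.interiorSet ∩ R.toSet = ∅
  rooms_disjoint : ∀ R1 ∈ rooms, ∀ R2 ∈ rooms, R1 ≠ R2 → R1.interiorSet ∩ R2.interiorSet = ∅
  corridors_disjoint : ∀ C1 ∈ corridors, ∀ C2 ∈ corridors, C1 ≠ C2 →
    C1.interiorSet ∩ C2.interiorSet = ∅
  connected : IsConnected ((⋃ R ∈ rooms, R.toSet) ∪ (⋃ C ∈ corridors, C.toSet))

/-- The polygonal region covered by an office-like polygon. -/
def OfficePolygon.region (P : OfficePolygon) : Set Plane :=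
  (⋃ R ∈ P.rooms, R.toSet) ∪ (⋃ C ∈ P.corridors, C.toSet)

/-- All vertices of the region lie on integer coordinates. -/
def HasIntegerVertices (S : Set Plane) : Prop :=
  ∀ v, IsVertex S v → ∃ a b : ℤ, v = pt a b

/-- Any two distinct vertices are at geodesic `L¹`-distance at least `1`. -/
def VertexSeparated (S : Set Plane) : Prop :=
  ∀ v w, IsVertex S v → IsVertex S w → v ≠ w → 1 ≤ geodesic S v w

/-- The corridors `C1` and `C2` are independent within `S`: no guard placed at a vertex
of one of them r-sees all of the other. -/
def IndependentCorridors (S : Set Plane) (C1 C2 : Rect) : Prop :=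
  (∀ v, IsVertex S v → v ∈ C1.toSet → ∃ q ∈ C2.toSet, ¬ RSee S v q) ∧
  (∀ v, IsVertex S v → v ∈ C2.toSet → ∃ q ∈ C1.toSet, ¬ RSee S v q)

/-- An office-like polygon is independent if all pairs of distinct corridors are
independent. -/
def OfficePolygon.Independent (P : OfficePolygon) : Prop :=
  ∀ C1 ∈ P.corridors, ∀ C2 ∈ P.corridors, C1 ≠ C2 → IndependentCorridors P.region C1 C2


/-- The size of the `g`-th vertical gap (counted from the bottom, `1 ≤ g ≤ k - 1`)
between consecutive rooms of the polygon `P_k`: the lowest and the highest gaps have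
size `2`, all others have size `1`. -/
def gapSize (k g : ℕ) : ℝ := if g = 1 ∨ g = k - 1 then 2 else 1

/-- The `y`-coordinate of the bottom edge of the room that is `j`-th from the bottom
(`0 ≤ j ≤ k - 1`) in the polygon `P_k`. -/
def roomBottomFromBottom (k j : ℕ) : ℝ :=
  (j : ℝ) + ∑ g ∈ Finset.Icc 1 j, gapSize k g

/-- The `y`-coordinate of the bottom edge of the room `R_i` of `P_k`
(rooms are numbered `1, …, k` from top to bottom). -/
def roomYBottom (k i : ℕ) : ℝ := roomBottomFromBottom k (k - i)

/-- The room `R_i` of `P_k`: height `1`, width `2k² + 4k + 1`, left boundary on the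
line `x = 0`. -/
def roomRect (k i : ℕ) : Rect where
  x1 := 0
  x2 := 2 * (k : ℝ) ^ 2 + 4 * k + 1
  y1 := roomYBottom k i
  y2 := roomYBottom k i + 1

/-- The corridor of `P_k` between the consecutive rooms `R_i` and `R_{i+1}`
(`1 ≤ i ≤ k - 1`) in the `j`-th vertical strip (`1 ≤ j ≤ k`): it has width `1`, its
left boundary lies on the line `x = 1 + (j - 1)(2k + 2)`, and its height fills the gap
between the two rooms. -/
def corridorPk (k i j : ℕ) : Rect where
  x1 := 1 + ((j : ℝ) - 1) * (2 * k + 2)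
  x2 := 2 + ((j : ℝ) - 1) * (2 * k + 2)
  y1 := roomYBottom k (i + 1) + 1
  y2 := roomYBottom k i

/-- The region covered by the office-like polygon `P_k`. -/
def PkRegion (k : ℕ) : Set Plane :=
  (⋃ i ∈ Finset.Icc 1 k, (roomRect k i).toSet) ∪
  (⋃ i ∈ Finset.Icc 1 (k - 1), ⋃ j ∈ Finset.Icc 1 k, (corridorPk k i j).toSet)

/-- The `j`-th vertical strip `S_j` of `P_k`: the part of `P_k` contained in the
vertical slab over the `x`-extent of the corridors with left boundary on the line
`x = 1 + (j - 1)(2k + 2)`, i.e. all these corridors together with the portions of the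
rooms in that column. -/
def stripSet (k j : ℕ) : Set Plane :=
  PkRegion k ∩
    {p | 1 + ((j : ℝ) - 1) * (2 * k + 2) ≤ px p ∧
         px p ≤ 2 + ((j : ℝ) - 1) * (2 * k + 2)}


/-!
Each of the `k` columns of corridors needs a guard of its own, since a point in the top gap of a
column is r-seen only from inside that column, and each middle room `R_i` needs a guard of its
own, since the point at mid-height of `R_i` on the right wall is r-seen only from the height of
`R_i`. A guard at a vertex where a corridor meets a middle room is within `L¹`-distance `4k` of
the guard of an adjacent column: the staircase path between them runs along the room and then up
the column, and the column guard, being a vertex, lies at height between `1` and `2k`. Hence at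
dispersion `4k + 1` the column guards avoid the heights of the middle rooms and the guards counted
above are `k + (k - 2)` distinct ones. Dispersion `4k + 1` is attained, by the guards at
alternately the lower and the upper corridor ends of the columns together with the lower right
corners of the middle rooms, so a guard set of maximum dispersion has dispersion at least `4k + 1`.
-/

open Filter Topology

/-! ### Coordinates and geodesic distance -/

@[simp] lemma px_pt (a b : ℝ) : px (pt a b) = a := rfl

@[simp] lemma py_pt (a b : ℝ) : py (pt a b) = b := rfl

lemma pt_px_py (p : Plane) : pt (px p) (py p) = p := rfl

lemma dist_eq_abs_add_abs (p q : Plane) : dist p q = |px p - px q| + |py p - py q| := by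
  rw [WithLp.prod_dist_eq_add (by norm_num)]
  simp [Real.dist_eq, px, py]

lemma edist_eq_ofReal (p q : Plane) :
    edist p q = ENNReal.ofReal (|px p - px q| + |py p - py q|) := by
  rw [edist_dist, dist_eq_abs_add_abs]

lemma ofReal_abs_sub_le_edist (p q : Plane) : ENNReal.ofReal |px p - px q| ≤ edist p q := by
  rw [edist_eq_ofReal]
  exact ENNReal.ofReal_le_ofReal (le_add_of_nonneg_right (abs_nonneg _))

lemma abs_sub_lt_of_dist_lt {p q : Plane} {ε : ℝ} (h : dist q p < ε) :
    |px q - px p| < ε ∧ |py q - py p| < ε := by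
  rw [dist_eq_abs_add_abs] at h
  exact ⟨by linarith [abs_nonneg (py q - py p)], by linarith [abs_nonneg (px q - px p)]⟩

lemma continuous_px : Continuous px := continuous_fst.comp (WithLp.prod_continuous_ofLp _ _ _)

lemma continuous_py : Continuous py := continuous_snd.comp (WithLp.prod_continuous_ofLp _ _ _)

@[fun_prop]
lemma continuous_pt {X : Type*} [TopologicalSpace X] {f g : X → ℝ} (hf : Continuous f)
    (hg : Continuous g) : Continuous fun x => pt (f x) (g x) :=
  (WithLp.prod_continuous_toLp _ _ _).comp (hf.prodMk hg)

lemma eVariationOn_le_of_edist_le {α E F : Type*} [LinearOrder α] [PseudoEMetricSpace E]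
    [PseudoEMetricSpace F] {f : α → E} {g : α → F}
    (h : ∀ s t, s ≤ t → edist (f s) (f t) ≤ edist (g s) (g t)) (s : Set α) :
    eVariationOn f s ≤ eVariationOn g s :=
  iSup_le fun ⟨_, u, hu, us⟩ => (Finset.sum_le_sum fun i _ => by
    rw [edist_comm, edist_comm (g _)]; exact h _ _ (hu i.le_succ)).trans (eVariationOn.sum_le hu us)

lemma edist_le_geodesic (S : Set Plane) (p q : Plane) : edist p q ≤ geodesic S p q :=
  le_iInf₂ fun γ _ => by
    simpa using eVariationOn.edist_le (fun t => γ t) (mem_univ 0) (mem_univ 1)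

lemma le_geodesic_of_forall_path_meets {S T : Set Plane} {p q : Plane} {c : ℝ≥0∞}
    (hmeet : ∀ γ : Path p q, range γ ⊆ S → ∃ t, γ t ∈ T)
    (hc : ∀ m ∈ T, c ≤ edist p m + edist m q) : c ≤ geodesic S p q := by
  refine le_iInf₂ fun γ hγ => ?_
  obtain ⟨t, ht⟩ := hmeet γ hγ
  have h₀ : (0 : unitInterval) ≤ t := unitInterval.nonneg'
  have h₁ : t ≤ 1 := unitInterval.le_one'
  calc c ≤ edist p (γ t) + edist (γ t) q := hc _ ht
    _ ≤ eVariationOn (fun t => γ t) (univ ∩ Icc 0 t) +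
        eVariationOn (fun t => γ t) (univ ∩ Icc t 1) := by
      gcongr
      · simpa using eVariationOn.edist_le (fun t => γ t) (s := univ ∩ Icc 0 t)
          ⟨mem_univ _, le_rfl, h₀⟩ ⟨mem_univ _, h₀, le_rfl⟩
      · simpa using eVariationOn.edist_le (fun t => γ t) (s := univ ∩ Icc t 1)
          ⟨mem_univ _, le_rfl, h₁⟩ ⟨mem_univ _, h₁, le_rfl⟩
    _ ≤ eVariationOn (fun t => γ t) univ :=
      (eVariationOn.Icc_add_Icc _ h₀ h₁ (mem_univ t)).trans_le (eVariationOn.mono _ (subset_univ _))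

lemma exists_py_eq_of_path {p q : Plane} (γ : Path p q) {y : ℝ} (hy : y ∈ uIcc (py p) (py q)) :
    ∃ t, py (γ t) = y := by
  have hcont : Continuous fun t => py (γ t) := continuous_py.comp γ.continuous
  rcases le_total (py p) (py q) with h | h
  · rw [uIcc_of_le h] at hy
    exact intermediate_value_univ 0 1 hcont (by simpa using hy)
  · rw [uIcc_of_ge h] at hy
    exact intermediate_value_univ 1 0 hcont (by simpa using hy)

lemma add_mul_sub_mem_uIcc {a b c : ℝ} (h₀ : 0 ≤ c) (h₁ : c ≤ 1) : a + c * (b - a) ∈ uIcc a b := by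
  rcases le_total a b with h | h
  · rw [uIcc_of_le h]; constructor <;> nlinarith
  · rw [uIcc_of_ge h]; constructor <;> nlinarith

def staircasePath (p q : Plane) : Path p q where
  toFun t := pt (px p + min (2 * (t : ℝ)) 1 * (px q - px p))
    (py p + max (2 * (t : ℝ) - 1) 0 * (py q - py p))
  continuous_toFun := by fun_prop
  source' := by simp [pt_px_py]
  target' := by norm_num [pt_px_py]

lemma range_staircasePath_subset {S : Set Plane} {p q : Plane}
    (hH : ∀ x ∈ uIcc (px p) (px q), pt x (py p) ∈ S)
    (hV : ∀ y ∈ uIcc (py p) (py q), pt (px q) y ∈ S) : range (staircasePath p q) ⊆ S := by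
  rintro _ ⟨t, rfl⟩
  have ht₀ : (0 : ℝ) ≤ t := t.2.1
  have ht₁ : (t : ℝ) ≤ 1 := t.2.2
  rcases le_total (t : ℝ) (1 / 2) with h | h
  · have hβ : max (2 * (t : ℝ) - 1) 0 = 0 := max_eq_right (by linarith)
    simpa [staircasePath, hβ] using
      hH _ (add_mul_sub_mem_uIcc (le_min (by linarith) zero_le_one) (min_le_right _ _))
  · have hα : min (2 * (t : ℝ)) 1 = 1 := min_eq_right (by linarith)
    simpa [staircasePath, hα] using
      hV _ (add_mul_sub_mem_uIcc (le_max_right _ _) (max_le (by linarith) zero_le_one))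

lemma eVariationOn_staircasePath (p q : Plane) :
    eVariationOn (fun t => staircasePath p q t) univ = edist p q := by
  -- `g t` is the length of the staircase path up to time `t`
  set g : unitInterval → ℝ := fun t =>
    min (2 * (t : ℝ)) 1 * |px q - px p| + max (2 * (t : ℝ) - 1) 0 * |py q - py p|
  have hα : ∀ s t : unitInterval, s ≤ t → min (2 * (s : ℝ)) 1 ≤ min (2 * (t : ℝ)) 1 :=
    fun s t (hst : (s : ℝ) ≤ t) => min_le_min_right _ (by linarith)
  have hβ : ∀ s t : unitInterval, s ≤ t → max (2 * (s : ℝ) - 1) 0 ≤ max (2 * (t : ℝ) - 1) 0 :=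
    fun s t (hst : (s : ℝ) ≤ t) => max_le_max_right _ (by linarith)
  have hg : Monotone g := fun s t hst => by
    have := hα s t hst; have := hβ s t hst
    dsimp only [g]; gcongr
  have hstep : ∀ c a b d : ℝ, a ≤ b → |c + a * d - (c + b * d)| = (b - a) * |d| :=
    fun c a b d h => by
      rw [show c + a * d - (c + b * d) = (a - b) * d by ring, abs_mul,
        abs_of_nonpos (sub_nonpos.2 h)]
      ring
  refine le_antisymm ?_ ?_
  · calc eVariationOn (fun t => staircasePath p q t) univ ≤ eVariationOn g univ := by
          refine eVariationOn_le_of_edist_le (fun s t hst => le_of_eq ?_) _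
          rw [edist_eq_ofReal, edist_dist (g s), Real.dist_eq, abs_sub_comm (g s),
            abs_of_nonneg (sub_nonneg.2 (hg hst))]
          simp only [staircasePath, Path.coe_mk', ContinuousMap.coe_mk, px_pt, py_pt, g,
            hstep _ _ _ _ (hα s t hst), hstep _ _ _ _ (hβ s t hst)]
          ring_nf
      _ = edist p q := by
          have hI : (univ : Set unitInterval) ∩ Icc 0 1 = univ :=
            inter_eq_left.2 fun t _ => ⟨unitInterval.nonneg', unitInterval.le_one'⟩
          rw [← hI, (hg.monotoneOn univ).eVariationOn_eq (mem_univ _) (mem_univ _),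
            edist_eq_ofReal]
          norm_num [g, abs_sub_comm]
  · simpa using eVariationOn.edist_le (fun t => staircasePath p q t) (mem_univ 0) (mem_univ 1)

lemma geodesic_le_edist_of_staircase {S : Set Plane} {p q : Plane}
    (hH : ∀ x ∈ uIcc (px p) (px q), pt x (py p) ∈ S)
    (hV : ∀ y ∈ uIcc (py p) (py q), pt (px q) y ∈ S) : geodesic S p q ≤ edist p q :=
  iInf₂_le_of_le (staircasePath p q) (range_staircasePath_subset hH hV)
    (eVariationOn_staircasePath p q).le

/-! ### Vertices -/

lemma mem_frontier_of_tendsto {X α : Type*} [TopologicalSpace X] {l : Filter α} [l.NeBot]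
    {S : Set X} {v : X} {f g : α → X} (hf : Tendsto f l (𝓝 v)) (hg : Tendsto g l (𝓝 v))
    (hfS : ∀ᶠ a in l, f a ∈ S) (hgS : ∀ᶠ a in l, g a ∉ S) : v ∈ frontier S := by
  rw [frontier_eq_closure_inter_closure]
  exact ⟨mem_closure_of_tendsto hf hfS, mem_closure_of_tendsto hg hgS⟩

lemma tendsto_pt_affine (a b u w : ℝ) :
    Tendsto (fun s => pt (a + s * u) (b + s * w)) (𝓝[>] 0) (𝓝 (pt a b)) := by
  simpa using ((continuous_pt (f := fun s => a + s * u) (g := fun s => b + s * w) (by fun_prop)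
    (by fun_prop)).tendsto 0).mono_left nhdsWithin_le_nhds

lemma isVertex_compl {S : Set Plane} {v : Plane} : IsVertex Sᶜ v ↔ IsVertex S v := by
  simp only [IsVertex, frontier_compl]

theorem isVertex_of_corner {S : Set Plane} {a b dx dy δ : ℝ} (hdx : dx ≠ 0) (hdy : dy ≠ 0)
    (hδ : 0 < δ) (h : ∀ s ∈ Ioo 0 δ, ∀ t ∈ Ioo 0 δ,
      pt (a + s * dx) (b + t * dy) ∉ S ∧ pt (a - s * dx) (b + t * dy) ∈ S ∧
        pt (a + s * dx) (b - t * dy) ∈ S ∧ pt (a - s * dx) (b - t * dy) ∈ S) :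
    IsVertex S (pt a b) := by
  have hl : ∀ᶠ s in 𝓝[>] (0 : ℝ), s ∈ Ioo 0 δ := Ioo_mem_nhdsGT hδ
  have hsF : ∀ s ∈ Ioo 0 δ, pt (a + s * dx) b ∈ frontier S := fun s hs =>
    mem_frontier_of_tendsto
      (by simpa [← sub_eq_add_neg] using tendsto_pt_affine (a + s * dx) b 0 (-dy))
      (by simpa using tendsto_pt_affine (a + s * dx) b 0 dy)
      (hl.mono fun t ht => (h s hs t ht).2.2.1) (hl.mono fun t ht => (h s hs t ht).1)
  have htF : ∀ t ∈ Ioo 0 δ, pt a (b + t * dy) ∈ frontier S := fun t ht =>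
    mem_frontier_of_tendsto
      (by simpa [← sub_eq_add_neg] using tendsto_pt_affine a (b + t * dy) (-dx) 0)
      (by simpa using tendsto_pt_affine a (b + t * dy) dx 0)
      (hl.mono fun s hs => (h s hs t ht).2.1) (hl.mono fun s hs => (h s hs t ht).1)
  have hvF : pt a b ∈ frontier S :=
    mem_frontier_of_tendsto (by simpa [← sub_eq_add_neg] using tendsto_pt_affine a b (-dx) (-dy))
      (tendsto_pt_affine a b dx dy) (hl.mono fun s hs => (h s hs s hs).2.2.2)
      (hl.mono fun s hs => (h s hs s hs).1)
  refine ⟨hvF, fun ε hε ⟨a', b', c, hab, hline⟩ => ?_⟩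
  have hsx : Tendsto (fun s => pt (a + s * dx) b) (𝓝[>] 0) (𝓝 (pt a b)) := by
    simpa using tendsto_pt_affine a b dx 0
  have hsy : Tendsto (fun s => pt a (b + s * dy)) (𝓝[>] 0) (𝓝 (pt a b)) := by
    simpa using tendsto_pt_affine a b 0 dy
  obtain ⟨s, hs, hsx, hsy⟩ := (hl.and ((hsx.eventually (Metric.ball_mem_nhds _ hε)).and
    (hsy.eventually (Metric.ball_mem_nhds _ hε)))).exists
  have h₀ := hline _ ⟨hvF, Metric.mem_ball_self hε⟩
  have h₁ := hline _ ⟨hsF s hs, hsx⟩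
  have h₂ := hline _ ⟨htF s hs, hsy⟩
  simp only [px_pt, py_pt] at h₀ h₁ h₂
  have hs₀ : s ≠ 0 := hs.1.ne'
  rcases hab with hab | hab
  · exact hab (by simpa [hs₀, hdx] using (by linarith : a' * (s * dx) = 0))
  · exact hab (by simpa [hs₀, hdy] using (by linarith : b' * (s * dy) = 0))

theorem not_isVertex_of_locally_halfPlane {S : Set Plane} {v : Plane} {a b c ε : ℝ}
    (hab : a ≠ 0 ∨ b ≠ 0) (hε : 0 < ε)
    (h : ∀ q, dist q v < ε → (q ∈ S ↔ c ≤ a * px q + b * py q)) : ¬ IsVertex S v := by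
  rintro ⟨-, hflat⟩
  refine hflat ε hε ⟨a, b, c, hab, fun q ⟨hqF, hqB⟩ => ?_⟩
  have hcont : Continuous fun r => a * px r + b * py r := by
    have := continuous_px; have := continuous_py; fun_prop
  rw [Metric.mem_ball] at hqB
  rcases lt_trichotomy (a * px q + b * py q) c with hlt | heq | hgt
  · have hU : IsOpen (Metric.ball v ε ∩ {r | a * px r + b * py r < c}) :=
      Metric.isOpen_ball.inter (isOpen_lt hcont continuous_const)
    have hdisj : Disjoint (Metric.ball v ε ∩ {r | a * px r + b * py r < c}) S :=
      Set.disjoint_left.2 fun r ⟨hr, hrc⟩ hrS => (not_le.2 hrc) ((h r hr).1 hrS)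
    exact absurd hqF.1 (Set.disjoint_left.1 (hdisj.closure_right hU) ⟨hqB, hlt⟩)
  · exact heq
  · have hU : IsOpen (Metric.ball v ε ∩ {r | c < a * px r + b * py r}) :=
      Metric.isOpen_ball.inter (isOpen_lt continuous_const hcont)
    have hsub : Metric.ball v ε ∩ {r | c < a * px r + b * py r} ⊆ S :=
      fun r ⟨hr, hrc⟩ => (h r hr).2 hrc.le
    exact absurd (interior_maximal hsub hU ⟨hqB, hgt⟩) hqF.2

/-! ### Rectangles, visibility and dispersion -/

lemma Rect.mem_toSet_iff {R : Rect} {p : Plane} :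
    p ∈ R.toSet ↔ px p ∈ Icc R.x1 R.x2 ∧ py p ∈ Icc R.y1 R.y2 := by
  simp only [Rect.toSet, mem_ofPred_eq, mem_Icc, and_assoc]

lemma Rect.isClosed_toSet (R : Rect) : IsClosed R.toSet := by
  rw [show R.toSet = px ⁻¹' Icc R.x1 R.x2 ∩ py ⁻¹' Icc R.y1 R.y2 by
    ext; exact Rect.mem_toSet_iff]
  exact (isClosed_Icc.preimage continuous_px).inter (isClosed_Icc.preimage continuous_py)

lemma Rect.interiorSet_subset_interior {R : Rect} {S : Set Plane} (hR : R.toSet ⊆ S) :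
    R.interiorSet ⊆ interior S := by
  refine interior_maximal (fun p hp => hR ⟨hp.1.le, hp.2.1.le, hp.2.2.1.le, hp.2.2.2.le⟩) ?_
  rw [show R.interiorSet = px ⁻¹' Ioo R.x1 R.x2 ∩ py ⁻¹' Ioo R.y1 R.y2 by
    ext; simp only [Rect.interiorSet, mem_ofPred_eq, mem_inter_iff, mem_preimage, mem_Ioo,
      and_assoc]]
  exact (isOpen_Ioo.preimage continuous_px).inter (isOpen_Ioo.preimage continuous_py)

lemma RSee.pt_mem {S : Set Plane} {p q : Plane} (h : RSee S p q) {x y : ℝ}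
    (hx : x ∈ uIcc (px p) (px q)) (hy : y ∈ uIcc (py p) (py q)) : pt x y ∈ S :=
  h ⟨hx.1, hx.2, hy.1, hy.2⟩

lemma rSee_of_subset {S : Set Plane} {R : Rect} {p q : Plane} (hp : p ∈ R.toSet)
    (hq : q ∈ R.toSet) (hR : R.toSet ⊆ S) : RSee S p q :=
  fun _ ⟨h₁, h₂, h₃, h₄⟩ => hR ⟨(le_min hp.1 hq.1).trans h₁, h₂.trans (max_le hp.2.1 hq.2.1),
    (le_min hp.2.2.1 hq.2.2.1).trans h₃, h₄.trans (max_le hp.2.2.2 hq.2.2.2)⟩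

lemma dispersionAtLeast_iff {S : Set Plane} {G : Finset Plane} {ℓ : ℝ≥0∞} :
    DispersionAtLeast S G ℓ ↔ ℓ ≤ dispersion S G := by
  simp only [DispersionAtLeast, dispersion, le_iInf_iff]

section SeparatedIntervals

variable {ι : Type*} {I : Set ι} {c : ι → ℝ}

lemma eq_of_mem_Icc_of_separated (hsep : ∀ m ∈ I, ∀ m' ∈ I, m ≠ m' → 2 ≤ |c m - c m'|)
    {m m' : ι} (hm : m ∈ I) (hm' : m' ∈ I) {x : ℝ} (hx : x ∈ Icc (c m) (c m + 1))
    (hx' : x ∈ Icc (c m') (c m' + 1)) : m = m' := by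
  by_contra hne
  rcases le_abs'.1 (hsep m hm m' hm' hne) with h | h <;> linarith [hx.1, hx.2, hx'.1, hx'.2]

lemma exists_mem_Icc_of_uIcc_covered (hsep : ∀ m ∈ I, ∀ m' ∈ I, m ≠ m' → 2 ≤ |c m - c m'|)
    {x₁ x₂ : ℝ} (hcov : ∀ x ∈ uIcc x₁ x₂, ∃ m ∈ I, x ∈ Icc (c m) (c m + 1)) :
    ∃ m ∈ I, x₁ ∈ Icc (c m) (c m + 1) ∧ x₂ ∈ Icc (c m) (c m + 1) := by
  wlog hle : x₁ ≤ x₂ generalizing x₁ x₂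
  · obtain ⟨m, hm, h₂, h₁⟩ := this (by rwa [uIcc_comm]) (le_of_not_ge hle)
    exact ⟨m, hm, h₁, h₂⟩
  obtain ⟨m, hm, hx₁⟩ := hcov x₁ left_mem_uIcc
  -- separation puts `z` into the interval of `x₁`, which rules out `z = c m + 3 / 2`
  set z := min x₂ (c m + 3 / 2)
  have hz : z ∈ Icc x₁ x₂ := ⟨le_min hle (by linarith [hx₁.2]), min_le_left _ _⟩
  obtain ⟨m', hm', hz'⟩ := hcov z (by rwa [uIcc_of_le hle])
  obtain rfl : m' = m := by
    by_contra hne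
    rcases le_abs'.1 (hsep m' hm' m hm hne) with h | h <;>
      linarith [hx₁.1, hz'.1, hz'.2, min_le_right x₂ (c m + 3 / 2), hz.1]
  have hzx : z = x₂ := min_eq_left <| by
    by_contra hlt
    linarith [hz'.2, min_eq_right (le_of_not_ge hlt)]
  exact ⟨m', hm', hx₁, hx₁.1.trans hle, hzx ▸ hz'.2⟩

end SeparatedIntervals

/-! ### The polygon `P_k` -/

section Pk

variable {k : ℕ}

def columnLeft (k j : ℕ) : ℝ := 1 + ((j : ℝ) - 1) * (2 * k + 2)

def rightWall (k : ℕ) : ℝ := 2 * (k : ℝ) ^ 2 + 4 * k + 1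

lemma columnLeft_succ (j : ℕ) : columnLeft k (j + 1) = columnLeft k j + (2 * k + 2) := by
  unfold columnLeft; push_cast; ring

lemma two_le_abs_columnLeft_sub {j j' : ℕ} (h : j ≠ j') :
    2 ≤ |columnLeft k j - columnLeft k j'| := by
  have hjj' : (1 : ℝ) ≤ |(j : ℝ) - j'| := by
    exact_mod_cast Int.one_le_abs (sub_ne_zero.2 (Nat.cast_injective.ne h) : (j : ℤ) - j' ≠ 0)
  rw [show columnLeft k j - columnLeft k j' = ((j : ℝ) - j') * (2 * k + 2) by
      unfold columnLeft; ring,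
    abs_mul, abs_of_pos (by positivity : (0 : ℝ) < 2 * k + 2)]
  nlinarith [k.cast_nonneg (α := ℝ)]

lemma one_le_columnLeft {j : ℕ} (hj : 1 ≤ j) : 1 ≤ columnLeft k j := by
  have : (1 : ℝ) ≤ j := by exact_mod_cast hj
  unfold columnLeft; nlinarith [k.cast_nonneg (α := ℝ)]

lemma columnLeft_add_one_le {j : ℕ} (hj : j ≤ k) : columnLeft k j + 1 ≤ 2 * (k : ℝ) ^ 2 := by
  have : (j : ℝ) ≤ k := by exact_mod_cast hj
  unfold columnLeft; nlinarith [k.cast_nonneg (α := ℝ)]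

lemma Icc_columnLeft_subset {j : ℕ} (hj : j ∈ Icc 1 k) :
    Icc (columnLeft k j) (columnLeft k j + 1) ⊆ Ioo 0 (rightWall k) := fun x hx => by
  have := one_le_columnLeft (k := k) hj.1
  have := columnLeft_add_one_le (k := k) hj.2
  exact ⟨by linarith [hx.1], by unfold rightWall; nlinarith [hx.2]⟩

lemma roomBottomFromBottom_succ (j : ℕ) :
    roomBottomFromBottom k (j + 1) = roomBottomFromBottom k j + 1 + gapSize k (j + 1) := by
  simp only [roomBottomFromBottom, Finset.sum_Icc_succ_top (Nat.le_add_left 1 j)]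
  push_cast; ring

lemma gapSize_mem_Icc (g : ℕ) : gapSize k g ∈ Icc 1 2 := by
  unfold gapSize; split_ifs <;> norm_num

lemma roomBottomFromBottom_mono : Monotone (roomBottomFromBottom k) :=
  monotone_nat_of_le_succ fun j => by
    rw [roomBottomFromBottom_succ]; linarith [(gapSize_mem_Icc (k := k) (j + 1)).1]

lemma roomBottomFromBottom_of_mem_Icc (hk : 3 ≤ k) {j : ℕ} (hj : j ∈ Icc 1 (k - 2)) :
    roomBottomFromBottom k j = 2 * j + 1 := by
  induction j with
  | zero => simp at hj
  | succ j ih =>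
    rw [roomBottomFromBottom_succ]
    rcases Nat.eq_zero_or_pos j with rfl | hj₀
    · simp [roomBottomFromBottom, gapSize]; norm_num
    · rw [ih ⟨hj₀, by grind⟩, gapSize, if_neg (by grind)]
      push_cast; ring

lemma roomYBottom_antitone : Antitone (roomYBottom k) := fun _ _ h =>
  roomBottomFromBottom_mono (Nat.sub_le_sub_left h k)

lemma roomYBottom_nonneg (i : ℕ) : 0 ≤ roomYBottom k i := by
  unfold roomYBottom
  simpa [roomBottomFromBottom] using roomBottomFromBottom_mono (k := k) (Nat.zero_le (k - i))

lemma roomYBottom_succ_add_two_le {i : ℕ} (hi : i < k) :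
    roomYBottom k (i + 1) + 2 ≤ roomYBottom k i := by
  have := gapSize_mem_Icc (k := k) (k - (i + 1) + 1)
  rw [roomYBottom, roomYBottom, show k - i = k - (i + 1) + 1 by omega, roomBottomFromBottom_succ]
  linarith [this.1]

lemma roomYBottom_add_two_le {i i' : ℕ} (h : i < i') (hi' : i' ≤ k) :
    roomYBottom k i' + 2 ≤ roomYBottom k i := by
  linarith [roomYBottom_antitone (k := k) (Nat.succ_le_of_lt h),
    roomYBottom_succ_add_two_le (k := k) (i := i) (by omega)]

lemma two_le_abs_roomYBottom_sub {i i' : ℕ} (hi : i ∈ Icc 1 k) (hi' : i' ∈ Icc 1 k)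
    (h : i ≠ i') : 2 ≤ |roomYBottom k i - roomYBottom k i'| := by
  rw [le_abs']
  rcases Nat.lt_or_gt_of_ne h with h | h
  · right; linarith [roomYBottom_add_two_le h hi'.2]
  · left; linarith [roomYBottom_add_two_le h hi.2]

lemma roomYBottom_self : roomYBottom k k = 0 := by
  simp [roomYBottom, roomBottomFromBottom]

lemma roomYBottom_of_mem_Icc (hk : 3 ≤ k) {i : ℕ} (hi : i ∈ Icc 2 (k - 1)) :
    roomYBottom k i = 2 * ((k : ℝ) - i) + 1 := by
  rw [roomYBottom, roomBottomFromBottom_of_mem_Icc hk ⟨by grind, by grind⟩,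
    Nat.cast_sub (by grind : i ≤ k)]

lemma roomYBottom_one (hk : 3 ≤ k) : roomYBottom k 1 = 2 * k := by
  have h := roomBottomFromBottom_succ (k := k) (k - 2)
  rw [roomBottomFromBottom_of_mem_Icc hk ⟨by omega, le_rfl⟩, show k - 2 + 1 = k - 1 by omega,
    gapSize, if_pos (Or.inr rfl), Nat.cast_sub (by omega : 2 ≤ k)] at h
  rw [roomYBottom, h]; push_cast; ring

lemma roomYBottom_two (hk : 3 ≤ k) : roomYBottom k 2 = 2 * k - 3 := by
  rw [roomYBottom_of_mem_Icc hk ⟨le_rfl, by omega⟩]; push_cast; ring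

lemma roomYBottom_sub_one (hk : 3 ≤ k) : roomYBottom k (k - 1) = 3 := by
  rw [roomYBottom_of_mem_Icc hk ⟨by omega, le_rfl⟩, Nat.cast_sub (by omega)]; push_cast; ring

lemma roomYBottom_le (hk : 3 ≤ k) {i : ℕ} (hi : 1 ≤ i) : roomYBottom k i ≤ 2 * k :=
  roomYBottom_one hk ▸ roomYBottom_antitone hi

lemma Icc_roomYBottom_subset (hk : 3 ≤ k) {i : ℕ} (hi : i ∈ Icc 2 (k - 1)) :
    Icc (roomYBottom k i) (roomYBottom k i + 1) ⊆ Icc 3 (2 * (k : ℝ) - 2) := by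
  have : (2 : ℝ) ≤ i := by exact_mod_cast hi.1
  have : (i : ℝ) + 1 ≤ k := by exact_mod_cast (by have := hi.2; omega : i + 1 ≤ k)
  rw [roomYBottom_of_mem_Icc hk hi]
  exact Icc_subset_Icc (by linarith) (by linarith)

lemma mem_roomRect {i : ℕ} {p : Plane} : p ∈ (roomRect k i).toSet ↔
    px p ∈ Icc 0 (rightWall k) ∧ py p ∈ Icc (roomYBottom k i) (roomYBottom k i + 1) :=
  Rect.mem_toSet_iff

lemma corridorPk_x2 (i j : ℕ) : (corridorPk k i j).x2 = columnLeft k j + 1 := by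
  simp only [corridorPk, columnLeft]; ring

lemma mem_corridorPk {i j : ℕ} {p : Plane} : p ∈ (corridorPk k i j).toSet ↔
    px p ∈ Icc (columnLeft k j) (columnLeft k j + 1) ∧
      py p ∈ Icc (roomYBottom k (i + 1) + 1) (roomYBottom k i) := by
  rw [Rect.mem_toSet_iff, corridorPk_x2]; rfl

def columnRect (k j : ℕ) : Rect := ⟨columnLeft k j, columnLeft k j + 1, 0, 2 * k + 1⟩

lemma mem_columnRect {j : ℕ} {p : Plane} : p ∈ (columnRect k j).toSet ↔
    px p ∈ Icc (columnLeft k j) (columnLeft k j + 1) ∧ py p ∈ Icc 0 (2 * (k : ℝ) + 1) :=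
  Rect.mem_toSet_iff

lemma mem_PkRegion {p : Plane} : p ∈ PkRegion k ↔
    (∃ i ∈ Icc 1 k, p ∈ (roomRect k i).toSet) ∨
      ∃ i ∈ Icc 1 (k - 1), ∃ j ∈ Icc 1 k, p ∈ (corridorPk k i j).toSet := by
  simp only [PkRegion, mem_union, mem_iUnion, Finset.mem_Icc, mem_Icc, exists_prop]

lemma isClosed_PkRegion : IsClosed (PkRegion k) :=
  (Finset.finite_toSet _).isClosed_biUnion (fun _ _ => Rect.isClosed_toSet _) |>.union <|
    (Finset.finite_toSet _).isClosed_biUnion fun _ _ =>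
      (Finset.finite_toSet _).isClosed_biUnion fun _ _ => Rect.isClosed_toSet _

lemma roomRect_subset {i : ℕ} (hi : i ∈ Icc 1 k) : (roomRect k i).toSet ⊆ PkRegion k :=
  fun _ hp => mem_PkRegion.2 (Or.inl ⟨i, hi, hp⟩)

lemma corridorPk_subset {i j : ℕ} (hi : i ∈ Icc 1 (k - 1)) (hj : j ∈ Icc 1 k) :
    (corridorPk k i j).toSet ⊆ PkRegion k :=
  fun _ hp => mem_PkRegion.2 (Or.inr ⟨i, hi, j, hj, hp⟩)

lemma mem_PkRegion_bounds (hk : 3 ≤ k) {p : Plane} (hp : p ∈ PkRegion k) :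
    px p ∈ Icc 0 (rightWall k) ∧ py p ∈ Icc 0 (2 * (k : ℝ) + 1) := by
  rcases mem_PkRegion.1 hp with ⟨i, hi, hr⟩ | ⟨i, hi, j, hj, hc⟩
  · obtain ⟨hx, hy⟩ := mem_roomRect.1 hr
    exact ⟨hx, by linarith [hy.1, roomYBottom_nonneg (k := k) i],
      by linarith [hy.2, roomYBottom_le hk hi.1]⟩
  · obtain ⟨hx, hy⟩ := mem_corridorPk.1 hc
    exact ⟨Ioo_subset_Icc_self (Icc_columnLeft_subset hj hx),
      by linarith [hy.1, roomYBottom_nonneg (k := k) (i + 1)],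
      by linarith [hy.2, roomYBottom_le hk hi.1]⟩

lemma exists_room_or_gap (hk : 3 ≤ k) {y : ℝ} (hy : y ∈ Icc 0 (2 * (k : ℝ) + 1)) :
    (∃ m ∈ Icc 1 k, y ∈ Icc (roomYBottom k m) (roomYBottom k m + 1)) ∨
      ∃ m ∈ Icc 1 (k - 1), y ∈ Icc (roomYBottom k (m + 1) + 1) (roomYBottom k m) := by
  -- `R_m` is the highest room whose bottom lies below `y`
  have hex : ∃ m, roomYBottom k m ≤ y := ⟨k, roomYBottom_self (k := k) ▸ hy.1⟩
  set m := Nat.find hex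
  have hm : roomYBottom k m ≤ y := Nat.find_spec hex
  have hmk : m ≤ k := Nat.find_min' hex (roomYBottom_self (k := k) ▸ hy.1)
  have hm₁ : 1 ≤ m := by
    by_contra h
    rw [Nat.lt_one_iff.1 (not_le.1 h)] at hm
    linarith [roomYBottom_succ_add_two_le (k := k) (i := 0) (by omega), roomYBottom_one hk, hy.2]
  by_cases hyt : y ≤ roomYBottom k m + 1
  · exact Or.inl ⟨m, ⟨hm₁, hmk⟩, hm, hyt⟩
  · have hm₂ : 2 ≤ m := by
      by_contra h
      rw [show m = 1 by omega, roomYBottom_one hk] at hyt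
      linarith [hy.2]
    have hlt := Nat.find_min hex (show m - 1 < m by omega)
    refine Or.inr ⟨m - 1, ⟨by omega, by omega⟩, ?_, (not_le.1 hlt).le⟩
    rw [show m - 1 + 1 = m by omega]
    exact (not_le.1 hyt).le

lemma columnRect_subset (hk : 3 ≤ k) {j : ℕ} (hj : j ∈ Icc 1 k) :
    (columnRect k j).toSet ⊆ PkRegion k := by
  intro p hp
  obtain ⟨hx, hy⟩ := mem_columnRect.1 hp
  rcases exists_room_or_gap hk hy with ⟨m, hm, hym⟩ | ⟨m, hm, hym⟩
  · exact roomRect_subset hm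
      (mem_roomRect.2 ⟨Ioo_subset_Icc_self (Icc_columnLeft_subset hj hx), hym⟩)
  · exact corridorPk_subset hm hj (mem_corridorPk.2 ⟨hx, hym⟩)

lemma not_mem_Icc_roomYBottom_of_mem_gap {i : ℕ} {y : ℝ}
    (hy : y ∈ Ioo (roomYBottom k (i + 1) + 1) (roomYBottom k i)) (m : ℕ) :
    y ∉ Icc (roomYBottom k m) (roomYBottom k m + 1) := fun hym => by
  rcases le_or_gt m i with h | h
  · linarith [roomYBottom_antitone (k := k) h, hym.1, hy.2]
  · linarith [roomYBottom_antitone (k := k) (Nat.succ_le_of_lt h), hym.2, hy.1]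

lemma exists_column_of_mem_gap {i : ℕ} {p : Plane} (hp : p ∈ PkRegion k)
    (hy : py p ∈ Ioo (roomYBottom k (i + 1) + 1) (roomYBottom k i)) :
    ∃ j ∈ Icc 1 k, px p ∈ Icc (columnLeft k j) (columnLeft k j + 1) := by
  rcases mem_PkRegion.1 hp with ⟨m, -, hr⟩ | ⟨_, _, j, hj, hc⟩
  · exact absurd (mem_roomRect.1 hr).2 (not_mem_Icc_roomYBottom_of_mem_gap hy m)
  · exact ⟨j, hj, (mem_corridorPk.1 hc).1⟩

lemma exists_room_of_sq_lt {p : Plane} (hp : p ∈ PkRegion k) (hx : 2 * (k : ℝ) ^ 2 < px p) :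
    ∃ m ∈ Icc 1 k, py p ∈ Icc (roomYBottom k m) (roomYBottom k m + 1) := by
  rcases mem_PkRegion.1 hp with ⟨m, hm, hr⟩ | ⟨_, _, j, hj, hc⟩
  · exact ⟨m, hm, (mem_roomRect.1 hr).2⟩
  · linarith [(mem_corridorPk.1 hc).1.2, columnLeft_add_one_le (k := k) hj.2]

lemma not_mem_PkRegion_of_mem_gap_of_lt_columnLeft {i j : ℕ} {p : Plane}
    (hy : py p ∈ Ioo (roomYBottom k (i + 1) + 1) (roomYBottom k i))
    (hx : px p ∈ Ioo (columnLeft k j - 1 / 2) (columnLeft k j)) : p ∉ PkRegion k := fun hp => by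
  obtain ⟨j', -, hxj'⟩ := exists_column_of_mem_gap hp hy
  rcases eq_or_ne j' j with rfl | hne
  · linarith [hx.2, hxj'.1]
  · rcases le_abs'.1 (two_le_abs_columnLeft_sub (k := k) hne) with h | h <;>
      linarith [hx.1, hx.2, hxj'.1, hxj'.2]

lemma not_mem_PkRegion_of_mem_gap_of_sq_lt {i : ℕ} {p : Plane}
    (hy : py p ∈ Ioo (roomYBottom k (i + 1) + 1) (roomYBottom k i))
    (hx : 2 * (k : ℝ) ^ 2 < px p) : p ∉ PkRegion k := fun hp => by
  obtain ⟨j, hj, hxj⟩ := exists_column_of_mem_gap hp hy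
  linarith [hxj.2, columnLeft_add_one_le (k := k) hj.2]

/-! ### Vertices of `P_k` inside a column -/

lemma not_isVertex_of_outer_edge (hk : 3 ≤ k) {v : Plane} (hx : px v ∈ Ioo 0 (rightWall k))
    (hy : py v = 0 ∨ py v = 2 * k + 1) : ¬ IsVertex (PkRegion k) v := by
  set ε := min (min (px v) (rightWall k - px v)) 1
  have hε₁ : ε ≤ px v := (min_le_left _ _).trans (min_le_left _ _)
  have hε₂ : ε ≤ rightWall k - px v := (min_le_left _ _).trans (min_le_right _ _)
  have hε₃ : ε ≤ 1 := min_le_right _ _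
  have hε : 0 < ε := lt_min (lt_min hx.1 (by linarith [hx.2])) one_pos
  have hnear : ∀ q, dist q v < ε → px q ∈ Icc 0 (rightWall k) ∧ |py q - py v| < 1 := fun q hq => by
    obtain ⟨hqx, hqy⟩ := abs_sub_lt_of_dist_lt hq
    rw [abs_lt] at hqx
    exact ⟨⟨by linarith, by linarith⟩, hqy.trans_le hε₃⟩
  rcases hy with hy | hy
  · refine not_isVertex_of_locally_halfPlane (a := 0) (b := 1) (c := 0) (Or.inr one_ne_zero) hε
      fun q hq => ?_
    obtain ⟨hqx, hqy⟩ := hnear q hq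
    rw [hy, sub_zero, abs_lt] at hqy
    rw [zero_mul, one_mul, zero_add]
    refine ⟨fun hqS => (mem_PkRegion_bounds hk hqS).2.1, fun h₀ => roomRect_subset
      ⟨by omega, le_rfl⟩ (mem_roomRect.2 ⟨hqx, ?_⟩)⟩
    rw [roomYBottom_self]
    exact ⟨h₀, by linarith⟩
  · refine not_isVertex_of_locally_halfPlane (a := 0) (b := -1) (c := -(2 * k + 1))
      (Or.inr (by norm_num)) hε fun q hq => ?_
    obtain ⟨hqx, hqy⟩ := hnear q hq
    rw [hy, abs_lt] at hqy
    rw [zero_mul, zero_add, neg_one_mul, neg_le_neg_iff]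
    refine ⟨fun hqS => (mem_PkRegion_bounds hk hqS).2.2, fun h₀ => roomRect_subset
      ⟨le_rfl, by omega⟩ (mem_roomRect.2 ⟨hqx, ?_⟩)⟩
    rw [roomYBottom_one hk]
    exact ⟨by linarith, h₀⟩

lemma not_isVertex_of_mem_gap {i j : ℕ} (hi : i ∈ Icc 1 (k - 1)) (hj : j ∈ Icc 1 k) {v : Plane}
    (hx : px v ∈ Icc (columnLeft k j) (columnLeft k j + 1))
    (hy : py v ∈ Ioo (roomYBottom k (i + 1) + 1) (roomYBottom k i)) :
    ¬ IsVertex (PkRegion k) v := by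
  set ε := min (min (py v - (roomYBottom k (i + 1) + 1)) (roomYBottom k i - py v)) (1 / 2)
  have hε₁ : ε ≤ py v - (roomYBottom k (i + 1) + 1) := (min_le_left _ _).trans (min_le_left _ _)
  have hε₂ : ε ≤ roomYBottom k i - py v := (min_le_left _ _).trans (min_le_right _ _)
  have hε₃ : ε ≤ 1 / 2 := min_le_right _ _
  have hε : 0 < ε := lt_min (lt_min (by linarith [hy.1]) (by linarith [hy.2])) (by norm_num)
  -- near `v` the region is the corridor column
  have hloc : ∀ q, dist q v < ε → (q ∈ PkRegion k ↔
      px q ∈ Icc (columnLeft k j) (columnLeft k j + 1)) ∧ |px q - px v| < 1 / 2 := by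
    intro q hq
    obtain ⟨hqx, hqy⟩ := abs_sub_lt_of_dist_lt hq
    have hqx' := abs_lt.1 hqx
    have hqgap : py q ∈ Ioo (roomYBottom k (i + 1) + 1) (roomYBottom k i) := by
      constructor <;> linarith [(abs_lt.1 hqy).1, (abs_lt.1 hqy).2]
    refine ⟨⟨fun hqS => ?_, fun hxq =>
      corridorPk_subset hi hj (mem_corridorPk.2 ⟨hxq, hqgap.1.le, hqgap.2.le⟩)⟩, by linarith⟩
    obtain ⟨j', -, hxj'⟩ := exists_column_of_mem_gap hqS hqgap
    obtain rfl : j' = j := by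
      by_contra hne
      rcases le_abs'.1 (two_le_abs_columnLeft_sub (k := k) hne) with h | h <;>
        linarith [hx.1, hx.2, hxj'.1, hxj'.2]
    exact hxj'
  rcases hx.1.eq_or_lt with hl | hl
  · refine not_isVertex_of_locally_halfPlane (a := 1) (b := 0) (c := columnLeft k j)
      (Or.inl one_ne_zero) hε fun q hq => ?_
    obtain ⟨hiff, hclose⟩ := hloc q hq
    rw [hiff, one_mul, zero_mul, add_zero]
    exact ⟨fun h => h.1, fun h => ⟨h, by linarith [(abs_lt.1 hclose).2]⟩⟩
  rcases hx.2.eq_or_lt with hr | hr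
  · refine not_isVertex_of_locally_halfPlane (a := -1) (b := 0) (c := -(columnLeft k j + 1))
      (Or.inl (by norm_num)) hε fun q hq => ?_
    obtain ⟨hiff, hclose⟩ := hloc q hq
    rw [hiff, neg_one_mul, zero_mul, add_zero, neg_le_neg_iff]
    exact ⟨fun h => h.2, fun h => ⟨by linarith [(abs_lt.1 hclose).1], h⟩⟩
  · refine fun hv => hv.1.2 (Rect.interiorSet_subset_interior (corridorPk_subset hi hj) ?_)
    exact ⟨hl, (corridorPk_x2 (k := k) i j).symm ▸ hr, hy.1, hy.2⟩

theorem IsVertex.exists_corridor_end (hk : 3 ≤ k) {j : ℕ} (hj : j ∈ Icc 1 k) {v : Plane}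
    (hv : IsVertex (PkRegion k) v) (hx : px v ∈ Icc (columnLeft k j) (columnLeft k j + 1)) :
    ∃ i ∈ Icc 1 (k - 1), v ∈ (corridorPk k i j).toSet ∧
      (py v = roomYBottom k (i + 1) + 1 ∨ py v = roomYBottom k i) := by
  have hb := mem_PkRegion_bounds hk (isClosed_PkRegion.frontier_subset hv.1)
  have hxin := Icc_columnLeft_subset hj hx
  rcases exists_room_or_gap hk hb.2 with ⟨m, hm, hy⟩ | ⟨m, hm, hy⟩
  · obtain ⟨hm₁, hm₂⟩ := hm
    rcases hy.1.eq_or_lt with hlo | hlo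
    · rcases eq_or_ne m k with rfl | hmk
      · exact absurd hv (not_isVertex_of_outer_edge hk hxin (Or.inl (roomYBottom_self ▸ hlo.symm)))
      have hgap := roomYBottom_succ_add_two_le (k := k) (i := m) (by omega)
      exact ⟨m, ⟨hm₁, by omega⟩, mem_corridorPk.2 ⟨hx, by linarith, hlo.symm.le⟩, Or.inr hlo.symm⟩
    rcases hy.2.eq_or_lt with hhi | hhi
    · rcases eq_or_ne m 1 with rfl | hm1
      · exact absurd hv (not_isVertex_of_outer_edge hk hxin
          (Or.inr (by rw [hhi, roomYBottom_one hk])))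
      have hgap := roomYBottom_succ_add_two_le (k := k) (i := m - 1) (by omega)
      rw [Nat.sub_add_cancel hm₁] at hgap
      refine ⟨m - 1, ⟨by omega, by omega⟩, mem_corridorPk.2 ⟨hx, ?_⟩, Or.inl ?_⟩ <;>
        rw [Nat.sub_add_cancel hm₁]
      exacts [⟨hhi.ge, by linarith⟩, hhi]
    · exact absurd hv fun hv => hv.1.2 (Rect.interiorSet_subset_interior
        (roomRect_subset ⟨hm₁, hm₂⟩) ⟨hxin.1, hxin.2, hlo, hhi⟩)
  · rcases hy.1.eq_or_lt with hlo | hlo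
    · exact ⟨m, hm, mem_corridorPk.2 ⟨hx, hy⟩, Or.inl hlo.symm⟩
    rcases hy.2.eq_or_lt with hhi | hhi
    · exact ⟨m, hm, mem_corridorPk.2 ⟨hx, hy⟩, Or.inr hhi⟩
    · exact absurd hv (not_isVertex_of_mem_gap hm hj hx ⟨hlo, hhi⟩)

lemma IsVertex.py_mem_Icc_of_column (hk : 3 ≤ k) {j : ℕ} (hj : j ∈ Icc 1 k) {v : Plane}
    (hv : IsVertex (PkRegion k) v) (hx : px v ∈ Icc (columnLeft k j) (columnLeft k j + 1)) :
    py v ∈ Icc 1 (2 * (k : ℝ)) := by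
  obtain ⟨i, ⟨hi₁, hi₂⟩, -, hy⟩ := hv.exists_corridor_end hk hj hx
  have := roomYBottom_succ_add_two_le (k := k) (i := i) (by omega)
  have := roomYBottom_nonneg (k := k) (i + 1)
  have := roomYBottom_le hk hi₁
  rcases hy with hy | hy <;> rw [hy] <;> constructor <;> linarith

def IsMiddleJunction (k : ℕ) (g : Plane) : Prop :=
  ∃ i ∈ Finset.Icc 2 (k - 1), ∃ i' ∈ Finset.Icc 1 (k - 1), ∃ j ∈ Finset.Icc 1 k,
    g ∈ (corridorPk k i' j).toSet ∧ g ∈ (roomRect k i).toSet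

lemma IsVertex.isMiddleJunction (hk : 3 ≤ k) {j : ℕ} (hj : j ∈ Icc 1 k) {v : Plane}
    (hv : IsVertex (PkRegion k) v) (hx : px v ∈ Icc (columnLeft k j) (columnLeft k j + 1))
    (hy : py v ∈ Icc 3 (2 * (k : ℝ) - 2)) : IsMiddleJunction k v := by
  have hxW := Ioo_subset_Icc_self (Icc_columnLeft_subset hj hx)
  obtain ⟨i, hi, hc, hyi | hyi⟩ := hv.exists_corridor_end hk hj hx <;> obtain ⟨hi₁, hi₂⟩ := id hi
  · have hik : i + 1 ≤ k - 1 := by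
      by_contra h
      rw [show i + 1 = k by omega, roomYBottom_self] at hyi
      linarith [hy.1]
    refine ⟨i + 1, Finset.mem_Icc.2 ⟨by omega, hik⟩, i, Finset.mem_Icc.2 hi, j,
      Finset.mem_Icc.2 hj, hc, mem_roomRect.2 ⟨hxW, ?_⟩⟩
    rw [hyi]; exact ⟨by linarith, le_rfl⟩
  · have hi2 : 2 ≤ i := by
      by_contra h
      rw [show i = 1 by omega, roomYBottom_one hk] at hyi
      linarith [hy.2]
    refine ⟨i, Finset.mem_Icc.2 ⟨hi2, hi₂⟩, i, Finset.mem_Icc.2 hi, j, Finset.mem_Icc.2 hj, hc,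
      mem_roomRect.2 ⟨hxW, ?_⟩⟩
    rw [hyi]; exact ⟨le_rfl, by linarith⟩

/-! ### Guards forced by visibility -/

def gapProbe (k j : ℕ) : Plane := pt (columnLeft k j + 1 / 2) (2 * k - 1)

def wallProbe (k i : ℕ) : Plane := pt (rightWall k) (roomYBottom k i + 1 / 2)

lemma gapProbe_mem (hk : 3 ≤ k) {j : ℕ} (hj : j ∈ Icc 1 k) : gapProbe k j ∈ PkRegion k := by
  have : (3 : ℝ) ≤ k := by exact_mod_cast hk
  refine columnRect_subset hk hj (mem_columnRect.2 ⟨?_, ?_⟩) <;>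
    simp only [gapProbe, px_pt, py_pt, mem_Icc] <;> constructor <;> linarith

lemma wallProbe_mem {i : ℕ} (hi : i ∈ Icc 1 k) : wallProbe k i ∈ PkRegion k := by
  refine roomRect_subset hi (mem_roomRect.2 ⟨⟨?_, le_rfl⟩, ?_⟩)
  · simp only [wallProbe, px_pt, rightWall]; positivity
  · simp only [wallProbe, py_pt, mem_Icc]; constructor <;> linarith

lemma RSee.px_mem_of_gapProbe (hk : 3 ≤ k) {j : ℕ} (hj : j ∈ Icc 1 k) {g : Plane}
    (h : RSee (PkRegion k) g (gapProbe k j)) :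
    px g ∈ Icc (columnLeft k j) (columnLeft k j + 1) := by
  have hsep : ∀ m ∈ Icc 1 k, ∀ m' ∈ Icc 1 k, m ≠ m' →
      2 ≤ |columnLeft k m - columnLeft k m'| := fun _ _ _ _ => two_le_abs_columnLeft_sub
  have hgap : 2 * (k : ℝ) - 1 ∈ Ioo (roomYBottom k (1 + 1) + 1) (roomYBottom k 1) := by
    rw [roomYBottom_two hk, roomYBottom_one hk]; constructor <;> linarith
  obtain ⟨m, hm, hgm, hqm⟩ := exists_mem_Icc_of_uIcc_covered hsep fun x hx =>
    exists_column_of_mem_gap (h.pt_mem hx right_mem_uIcc) hgap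
  obtain rfl : m = j := eq_of_mem_Icc_of_separated hsep hm hj hqm
    ⟨by simp [gapProbe], by simp [gapProbe]; norm_num⟩
  exact hgm

lemma RSee.py_mem_of_wallProbe {i : ℕ} (hi : i ∈ Icc 1 k) {g : Plane}
    (h : RSee (PkRegion k) g (wallProbe k i)) :
    py g ∈ Icc (roomYBottom k i) (roomYBottom k i + 1) := by
  have hsep : ∀ m ∈ Icc 1 k, ∀ m' ∈ Icc 1 k, m ≠ m' →
      2 ≤ |roomYBottom k m - roomYBottom k m'| :=
    fun _ hm _ hm' => two_le_abs_roomYBottom_sub hm hm'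
  obtain ⟨m, hm, hgm, hqm⟩ := exists_mem_Icc_of_uIcc_covered hsep fun y hy =>
    exists_room_of_sq_lt (h.pt_mem right_mem_uIcc hy) (by
      simp only [wallProbe, px_pt, rightWall]; nlinarith [k.cast_nonneg (α := ℝ)])
  obtain rfl : m = i := eq_of_mem_Icc_of_separated hsep hm hi hqm
    ⟨by simp [wallProbe], by simp [wallProbe]; norm_num⟩
  exact hgm

lemma natCast_four_mul_add_one (k : ℕ) :
    ((4 * k + 1 : ℕ) : ℝ≥0∞) = ENNReal.ofReal (4 * k + 1) := by
  rw [← ENNReal.ofReal_natCast]; push_cast; rfl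

lemma exists_adjacent_column {j : ℕ} (hk : 2 ≤ k) (hj : j ∈ Icc 1 k) :
    ∃ j' ∈ Icc 1 k, |columnLeft k j - columnLeft k j'| = 2 * k + 2 := by
  obtain ⟨hj₁, hj₂⟩ := hj
  have hpos : (0 : ℝ) ≤ 2 * k + 2 := by positivity
  rcases lt_or_ge j k with hjk | hjk
  · refine ⟨j + 1, ⟨by omega, hjk⟩, ?_⟩
    rw [columnLeft_succ, sub_add_cancel_left, abs_neg, abs_of_nonneg hpos]
  · obtain ⟨j, rfl⟩ : ∃ j₀, j = j₀ + 1 := ⟨j - 1, by omega⟩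
    refine ⟨j, ⟨by omega, by omega⟩, ?_⟩
    rw [columnLeft_succ, add_sub_cancel_left, abs_of_nonneg hpos]

theorem not_dispersionAtLeast_of_isMiddleJunction (hk : 3 ≤ k) {G : Finset Plane}
    (hG : IsGuardSet (PkRegion k) G) {g : Plane} (hg : g ∈ G) (hjunc : IsMiddleJunction k g) :
    ¬ DispersionAtLeast (PkRegion k) G ((4 * k + 1 : ℕ) : ℝ≥0∞) := by
  obtain ⟨i, hi, i', -, j, hj, hgc, hgr⟩ := hjunc
  rw [Finset.mem_Icc] at hi hj
  have hxg := (mem_corridorPk.1 hgc).1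
  obtain ⟨hxg', hyg⟩ := mem_roomRect.1 hgr
  have hyg' := Icc_roomYBottom_subset hk hi hyg
  obtain ⟨j', hj', hjj'⟩ := exists_adjacent_column (by omega) hj
  rw [abs_eq (by positivity)] at hjj'
  obtain ⟨g', hg', hsee⟩ := hG.2 _ (gapProbe_mem hk hj')
  have hxg'' := hsee.px_mem_of_gapProbe hk hj'
  have hyg'' := (hG.1 g' hg').py_mem_Icc_of_column hk hj' hxg''
  have hne : g ≠ g' := by
    rintro rfl
    rcases hjj' with h | h <;> linarith [hxg.1, hxg.2, hxg''.1, hxg''.2]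
  have hclose : geodesic (PkRegion k) g g' ≤ ENNReal.ofReal (4 * k) := by
    refine (geodesic_le_edist_of_staircase (fun x hx => ?_) fun y hy => ?_).trans ?_
    · refine roomRect_subset ⟨by omega, by omega⟩ (mem_roomRect.2 ⟨?_, hyg⟩)
      exact uIcc_subset_Icc hxg' (Ioo_subset_Icc_self (Icc_columnLeft_subset hj' hxg'')) hx
    · refine columnRect_subset hk hj' (mem_columnRect.2 ⟨hxg'', uIcc_subset_Icc ?_ ?_ hy⟩) <;>
        constructor <;> linarith [hyg'.1, hyg'.2, hyg''.1, hyg''.2]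
    · rw [edist_eq_ofReal]
      refine ENNReal.ofReal_le_ofReal ?_
      have hdx : |px g - px g'| ≤ 2 * k + 3 := by
        rw [abs_le]
        constructor <;> rcases hjj' with h | h <;> linarith [hxg.1, hxg.2, hxg''.1, hxg''.2]
      have hdy : |py g - py g'| ≤ 2 * k - 3 := by
        rw [abs_le]; constructor <;> linarith [hyg'.1, hyg'.2, hyg''.1, hyg''.2]
      linarith
  intro hD
  have := (hD g hg g' hg' hne).trans hclose
  rw [natCast_four_mul_add_one, ENNReal.ofReal_le_ofReal_iff (by positivity)] at this
  linarith

lemma card_add_card_le_card {α ι κ : Type*} [DecidableEq α] {s : Finset ι} {t : Finset κ}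
    {G : Finset α} {f : ι → α} {h : κ → α} (hf : ∀ a ∈ s, f a ∈ G) (hh : ∀ b ∈ t, h b ∈ G)
    (hfinj : InjOn f s) (hhinj : InjOn h t) (hne : ∀ a ∈ s, ∀ b ∈ t, f a ≠ h b) :
    s.card + t.card ≤ G.card := by
  rw [← Finset.card_image_of_injOn hfinj, ← Finset.card_image_of_injOn hhinj,
    ← Finset.card_union_of_disjoint]
  · refine Finset.card_le_card fun g hg => ?_
    rcases Finset.mem_union.1 hg with hg | hg <;> obtain ⟨_, hm, rfl⟩ := Finset.mem_image.1 hg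
    exacts [hf _ hm, hh _ hm]
  · refine Finset.disjoint_left.2 fun g hgf hgh => ?_
    obtain ⟨a, ha, rfl⟩ := Finset.mem_image.1 hgf
    obtain ⟨b, hb, hab⟩ := Finset.mem_image.1 hgh
    exact hne a ha b hb hab.symm

theorem card_ge_of_dispersionAtLeast (hk : 3 ≤ k) {G : Finset Plane}
    (hG : IsGuardSet (PkRegion k) G)
    (hD : DispersionAtLeast (PkRegion k) G ((4 * k + 1 : ℕ) : ℝ≥0∞)) : 2 * k - 2 ≤ G.card := by
  have hmid : Icc 2 (k - 1) ⊆ Icc 1 k := Icc_subset_Icc one_le_two (Nat.sub_le k 1)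
  choose! f hfG hfsee using fun j (hj : j ∈ Icc 1 k) => hG.2 _ (gapProbe_mem hk hj)
  choose! h hhG hhsee using fun i (hi : i ∈ Icc 2 (k - 1)) => hG.2 _ (wallProbe_mem (hmid hi))
  have hfx : ∀ j ∈ Icc 1 k, px (f j) ∈ Icc (columnLeft k j) (columnLeft k j + 1) :=
    fun j hj => (hfsee j hj).px_mem_of_gapProbe hk hj
  have hhy : ∀ i ∈ Icc 2 (k - 1), py (h i) ∈ Icc (roomYBottom k i) (roomYBottom k i + 1) :=
    fun i hi => (hhsee i hi).py_mem_of_wallProbe (hmid hi)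
  have hfh : ∀ j ∈ Icc 1 k, ∀ i ∈ Icc 2 (k - 1), f j ≠ h i := fun j hj i hi hji =>
    not_dispersionAtLeast_of_isMiddleJunction hk hG (hfG j hj) ((hG.1 _ (hfG j hj)).isMiddleJunction
      hk hj (hfx j hj) (hji ▸ Icc_roomYBottom_subset hk hi (hhy i hi))) hD
  have hfinj : InjOn f (Finset.Icc 1 k) := fun j hj j' hj' hjj' =>
    eq_of_mem_Icc_of_separated (I := Icc 1 k) (fun _ _ _ _ => two_le_abs_columnLeft_sub)
      (Finset.mem_Icc.1 hj) (Finset.mem_Icc.1 hj') (hfx j (Finset.mem_Icc.1 hj))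
      (hjj' ▸ hfx j' (Finset.mem_Icc.1 hj'))
  have hhinj : InjOn h (Finset.Icc 2 (k - 1)) := fun i hi i' hi' hii' =>
    eq_of_mem_Icc_of_separated (I := Icc 1 k) (fun _ hm _ hm' => two_le_abs_roomYBottom_sub hm hm')
      (hmid (Finset.mem_Icc.1 hi)) (hmid (Finset.mem_Icc.1 hi')) (hhy i (Finset.mem_Icc.1 hi))
      (hii' ▸ hhy i' (Finset.mem_Icc.1 hi'))
  have hcard := card_add_card_le_card (fun j hj => hfG j (Finset.mem_Icc.1 hj))
    (fun i hi => hhG i (Finset.mem_Icc.1 hi)) hfinj hhinj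
    fun j hj i hi => hfh j (Finset.mem_Icc.1 hj) i (Finset.mem_Icc.1 hi)
  rw [Nat.card_Icc, Nat.card_Icc] at hcard
  omega

/-! ### A guard set of dispersion `4k + 1` -/

-- Alternating between the lower and the upper corridor ends puts the guards of adjacent columns
-- at distance `(2k + 2) + (2k - 1) = 4k + 1`.
def stripGuard (k j : ℕ) : Plane := pt (columnLeft k j) (if Odd j then 2 * k else 1)

def roomGuard (k i : ℕ) : Plane := pt (rightWall k) (roomYBottom k i)

def guardsPk (k : ℕ) : Finset Plane :=
  (Finset.Icc 1 k).image (stripGuard k) ∪ (Finset.Icc 2 (k - 1)).image (roomGuard k)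

lemma isVertex_stripGuard (hk : 3 ≤ k) {j : ℕ} (hj : j ∈ Icc 1 k) :
    IsVertex (PkRegion k) (stripGuard k j) := by
  have : (3 : ℝ) ≤ k := by exact_mod_cast hk
  have := one_le_columnLeft (k := k) hj.1
  have := columnLeft_add_one_le (k := k) hj.2
  have : 2 * (k : ℝ) ^ 2 < rightWall k := by unfold rightWall; linarith
  unfold stripGuard
  split_ifs
  · refine isVertex_of_corner (dx := -1) (dy := -1) (δ := 1 / 2) (by norm_num) (by norm_num)
      (by norm_num) fun s ⟨hs₀, hs₁⟩ t ⟨ht₀, ht₁⟩ => ?_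
    simp only [mul_neg, mul_one, sub_neg_eq_add, ← sub_eq_add_neg]
    refine ⟨not_mem_PkRegion_of_mem_gap_of_lt_columnLeft (i := 1) (j := j) ?_ ?_,
      corridorPk_subset ⟨le_rfl, by omega⟩ hj (mem_corridorPk.2 ⟨?_, ?_⟩),
      roomRect_subset ⟨le_rfl, by omega⟩ (mem_roomRect.2 ⟨?_, ?_⟩),
      roomRect_subset ⟨le_rfl, by omega⟩ (mem_roomRect.2 ⟨?_, ?_⟩)⟩ <;>
    simp only [px_pt, py_pt, roomYBottom_two hk, roomYBottom_one hk, mem_Icc, mem_Ioo] <;>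
    constructor <;> linarith
  · refine isVertex_of_corner (dx := -1) (dy := 1) (δ := 1 / 2) (by norm_num) (by norm_num)
      (by norm_num) fun s ⟨hs₀, hs₁⟩ t ⟨ht₀, ht₁⟩ => ?_
    simp only [mul_neg, mul_one, sub_neg_eq_add, ← sub_eq_add_neg]
    have hk₁ : k - 1 + 1 = k := by omega
    refine ⟨not_mem_PkRegion_of_mem_gap_of_lt_columnLeft (i := k - 1) (j := j) ?_ ?_,
      corridorPk_subset ⟨by omega, le_rfl⟩ hj (mem_corridorPk.2 ⟨?_, ?_⟩),
      roomRect_subset ⟨by omega, le_rfl⟩ (mem_roomRect.2 ⟨?_, ?_⟩),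
      roomRect_subset ⟨by omega, le_rfl⟩ (mem_roomRect.2 ⟨?_, ?_⟩)⟩ <;>
    simp only [px_pt, py_pt, hk₁, roomYBottom_self, roomYBottom_sub_one hk, mem_Icc, mem_Ioo] <;>
    constructor <;> linarith

lemma isVertex_roomGuard (hk : 3 ≤ k) {i : ℕ} (hi : i ∈ Icc 2 (k - 1)) :
    IsVertex (PkRegion k) (roomGuard k i) := by
  have : 2 * (k : ℝ) ^ 2 + 1 ≤ rightWall k := by unfold rightWall; linarith [k.cast_nonneg (α := ℝ)]
  have : 0 ≤ 2 * (k : ℝ) ^ 2 := by positivity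
  have := roomYBottom_succ_add_two_le (k := k) (i := i) (by have := hi.2; omega)
  have hout : ∀ {p : Plane}, rightWall k < px p → p ∈ (PkRegion k)ᶜ :=
    fun hx hp => (not_le.2 hx) (mem_PkRegion_bounds hk hp).1.2
  -- a convex corner of the region is a reflex corner of its complement
  refine isVertex_compl.1 (isVertex_of_corner (dx := -1) (dy := 1) (δ := 1 / 2) (by norm_num)
    one_ne_zero (by norm_num) fun s ⟨hs₀, hs₁⟩ t ⟨ht₀, ht₁⟩ => ?_)
  simp only [mul_neg, mul_one, sub_neg_eq_add, ← sub_eq_add_neg]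
  refine ⟨not_not.2 (roomRect_subset (Icc_subset_Icc one_le_two (Nat.sub_le k 1) hi)
    (mem_roomRect.2 ⟨?_, ?_⟩)), hout ?_, not_mem_PkRegion_of_mem_gap_of_sq_lt (i := i) ?_ ?_,
    hout ?_⟩ <;>
  simp only [px_pt, py_pt, mem_Icc, mem_Ioo] <;> (try constructor) <;> linarith

lemma stripGuard_mem_columnRect (hk : 3 ≤ k) (j : ℕ) :
    stripGuard k j ∈ (columnRect k j).toSet := by
  have : (3 : ℝ) ≤ k := by exact_mod_cast hk
  refine mem_columnRect.2 ⟨⟨le_rfl, by simp [stripGuard]⟩, ?_⟩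
  simp only [stripGuard, py_pt]
  split_ifs <;> constructor <;> linarith

lemma isGuardSet_guardsPk (hk : 3 ≤ k) : IsGuardSet (PkRegion k) (guardsPk k) := by
  have : (3 : ℝ) ≤ k := by exact_mod_cast hk
  refine ⟨fun g hg => ?_, fun p hp => ?_⟩
  · rcases Finset.mem_union.1 hg with hg | hg <;> obtain ⟨m, hm, rfl⟩ := Finset.mem_image.1 hg
    exacts [isVertex_stripGuard hk (Finset.mem_Icc.1 hm),
      isVertex_roomGuard hk (Finset.mem_Icc.1 hm)]
  have hstrip : ∀ j ∈ Icc 1 k, stripGuard k j ∈ guardsPk k := fun j hj =>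
    Finset.mem_union_left _ (Finset.mem_image_of_mem _ (Finset.mem_Icc.2 hj))
  rcases mem_PkRegion.1 hp with ⟨i, ⟨hi₁, hi₂⟩, hr⟩ | ⟨i, hi, j, hj, hc⟩
  · have hsee : ∀ g ∈ (roomRect k i).toSet, RSee (PkRegion k) g p :=
      fun g hg => rSee_of_subset hg hr (roomRect_subset ⟨hi₁, hi₂⟩)
    have hxW : ∀ j ∈ Icc 1 k, px (stripGuard k j) ∈ Icc 0 (rightWall k) := fun j hj =>
      Ioo_subset_Icc_self (Icc_columnLeft_subset hj ⟨le_rfl, by simp [stripGuard]⟩)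
    by_cases hi₁' : i = 1
    · subst hi₁'
      refine ⟨stripGuard k 1, hstrip 1 ⟨le_rfl, hi₂⟩,
        hsee _ (mem_roomRect.2 ⟨hxW 1 ⟨le_rfl, hi₂⟩, ?_⟩)⟩
      simp only [stripGuard, py_pt, odd_one, if_true, roomYBottom_one hk, mem_Icc]
      constructor <;> linarith
    by_cases hik : i = k
    · subst hik
      refine ⟨stripGuard i 2, hstrip 2 ⟨one_le_two, by omega⟩,
        hsee _ (mem_roomRect.2 ⟨hxW 2 ⟨one_le_two, by omega⟩, ?_⟩)⟩
      simp only [stripGuard, py_pt, Nat.not_odd_iff_even.2 even_two, if_false, roomYBottom_self,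
        mem_Icc]
      norm_num
    · refine ⟨roomGuard k i, Finset.mem_union_right _ (Finset.mem_image_of_mem _
        (Finset.mem_Icc.2 ⟨by omega, by omega⟩)), hsee _ (mem_roomRect.2 ⟨⟨?_, le_rfl⟩, ?_⟩)⟩
      · simp only [roomGuard, px_pt, rightWall]; positivity
      · simp only [roomGuard, py_pt, mem_Icc]; constructor <;> linarith
  · obtain ⟨hx, hy⟩ := mem_corridorPk.1 hc
    refine ⟨stripGuard k j, hstrip j hj, rSee_of_subset (stripGuard_mem_columnRect hk j)
      (mem_columnRect.2 ⟨hx, ?_, ?_⟩) (columnRect_subset hk hj)⟩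
    · linarith [hy.1, roomYBottom_nonneg (k := k) (i + 1)]
    · linarith [hy.2, roomYBottom_le hk hi.1]

lemma le_edist_stripGuard (hk : 3 ≤ k) {j j' : ℕ} (h : j < j') :
    ENNReal.ofReal (4 * k + 1) ≤ edist (stripGuard k j) (stripGuard k j') := by
  have : (3 : ℝ) ≤ k := by exact_mod_cast hk
  rw [edist_eq_ofReal]
  refine ENNReal.ofReal_le_ofReal ?_
  simp only [stripGuard, px_pt, py_pt]
  rcases (show j' = j + 1 ∨ j + 2 ≤ j' by omega) with rfl | hfar
  · have hdy : |(if Odd j then 2 * (k : ℝ) else 1) - if Odd (j + 1) then 2 * (k : ℝ) else 1| =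
        2 * k - 1 := by
      by_cases ho : Odd j
      · rw [if_pos ho, if_neg (Nat.odd_add_one.not.2 (not_not.2 ho)), abs_of_pos (by linarith)]
      · rw [if_neg ho, if_pos (Nat.odd_add_one.2 ho), abs_sub_comm, abs_of_pos (by linarith)]
    rw [hdy, columnLeft_succ, sub_add_cancel_left, abs_neg, abs_of_pos (by positivity)]
    linarith
  · have hfar' : (j : ℝ) + 2 ≤ j' := by exact_mod_cast hfar
    have hdx : 2 * (2 * k + 2) ≤ |columnLeft k j - columnLeft k j'| := by
      rw [abs_sub_comm, show columnLeft k j' - columnLeft k j = ((j' : ℝ) - j) * (2 * k + 2) by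
        unfold columnLeft; ring]
      exact (le_abs_self _).trans' (by nlinarith)
    linarith [abs_nonneg ((if Odd j then 2 * (k : ℝ) else 1) - if Odd j' then 2 * (k : ℝ) else 1)]

lemma le_edist_stripGuard_roomGuard {j : ℕ} (hj : j ≤ k) (i : ℕ) :
    ENNReal.ofReal (4 * k + 1) ≤ edist (stripGuard k j) (roomGuard k i) := by
  refine (ENNReal.ofReal_le_ofReal ?_).trans (ofReal_abs_sub_le_edist _ _)
  rw [abs_sub_comm]
  refine (le_abs_self _).trans' ?_
  simp only [stripGuard, roomGuard, px_pt, rightWall]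
  linarith [columnLeft_add_one_le (k := k) hj]

/-- Every path between two room guards crosses the gap above the lower room, where the region
lies left of `x = 2k²`. -/
lemma le_geodesic_roomGuard {a b c : ℕ} (hc : c ∈ Icc 2 (k - 1))
    (hy : roomYBottom k c + 5 / 4 ∈ uIcc (roomYBottom k a) (roomYBottom k b)) :
    ENNReal.ofReal (4 * k + 1) ≤ geodesic (PkRegion k) (roomGuard k a) (roomGuard k b) := by
  obtain ⟨hc₁, hc₂⟩ := hc
  have hgap := roomYBottom_succ_add_two_le (k := k) (i := c - 1) (by omega)
  rw [Nat.sub_add_cancel (by omega)] at hgap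
  refine le_geodesic_of_forall_path_meets
    (T := {m | m ∈ PkRegion k ∧ py m = roomYBottom k c + 5 / 4}) (fun γ hγ => ?_)
    fun m ⟨hmS, hmy⟩ => ?_
  · obtain ⟨t, ht⟩ := exists_py_eq_of_path γ hy
    exact ⟨t, hγ (mem_range_self t), ht⟩
  · have hmgap : py m ∈ Ioo (roomYBottom k (c - 1 + 1) + 1) (roomYBottom k (c - 1)) := by
      rw [Nat.sub_add_cancel (by omega), hmy]; constructor <;> linarith
    obtain ⟨j, hj, hxj⟩ := exists_column_of_mem_gap hmS hmgap
    have hxm : px m ≤ 2 * (k : ℝ) ^ 2 := hxj.2.trans (columnLeft_add_one_le hj.2)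
    calc ENNReal.ofReal (4 * k + 1) ≤ ENNReal.ofReal |px (roomGuard k a) - px m| := by
          refine ENNReal.ofReal_le_ofReal ((le_abs_self _).trans' ?_)
          simp only [roomGuard, px_pt, rightWall]; linarith
      _ ≤ edist (roomGuard k a) m := ofReal_abs_sub_le_edist _ _
      _ ≤ _ := le_self_add

lemma dispersionAtLeast_guardsPk (hk : 3 ≤ k) :
    DispersionAtLeast (PkRegion k) (guardsPk k) ((4 * k + 1 : ℕ) : ℝ≥0∞) := by
  intro g hg g' hg' hne
  rw [natCast_four_mul_add_one]
  rcases Finset.mem_union.1 hg with hg | hg <;> rcases Finset.mem_union.1 hg' with hg' | hg' <;>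
    obtain ⟨m, hm, rfl⟩ := Finset.mem_image.1 hg <;>
    obtain ⟨m', hm', rfl⟩ := Finset.mem_image.1 hg' <;>
    rw [Finset.mem_Icc] at hm hm'
  · refine (edist_le_geodesic _ _ _).trans' ?_
    rcases lt_or_gt_of_ne (fun h : m = m' => hne (h ▸ rfl)) with h | h
    · exact le_edist_stripGuard hk h
    · exact edist_comm (stripGuard k m) _ ▸ le_edist_stripGuard hk h
  · exact (edist_le_geodesic _ _ _).trans' (le_edist_stripGuard_roomGuard hm.2 m')
  · exact (edist_le_geodesic _ _ _).trans'
      (edist_comm (stripGuard k m') _ ▸ le_edist_stripGuard_roomGuard hm'.2 m)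
  · rcases lt_or_gt_of_ne (fun h : m = m' => hne (h ▸ rfl)) with h | h
    · have := roomYBottom_add_two_le (k := k) h (by omega)
      exact le_geodesic_roomGuard hm' (mem_uIcc.2 (Or.inr ⟨by linarith, by linarith⟩))
    · have := roomYBottom_add_two_le (k := k) h (by omega)
      exact le_geodesic_roomGuard hm (mem_uIcc.2 (Or.inl ⟨by linarith, by linarith⟩))

end Pk

/-- For every integer `k ≥ 3`, no vertex guard set of `P_k` that
contains a guard at a vertex shared by a corridor and one of the rooms `R_2, …, R_{k-1}`
achieves a dispersion distance of `4k + 1`; consequently, every vertex guard set of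
`P_k` attaining the maximum dispersion distance has cardinality at least `2k - 2`. -/
theorem Pk_max_dispersion_card_ge (k : ℕ) (hk : 3 ≤ k) :
    (∀ G : Finset Plane, IsGuardSet (PkRegion k) G →
        (∃ g ∈ G, ∃ i ∈ Finset.Icc 2 (k - 1),
          ∃ i' ∈ Finset.Icc 1 (k - 1), ∃ j ∈ Finset.Icc 1 k,
            g ∈ (corridorPk k i' j).toSet ∧ g ∈ (roomRect k i).toSet) →
        ¬ DispersionAtLeast (PkRegion k) G ((4 * k + 1 : ℕ) : ℝ≥0∞)) ∧
    ∀ G : Finset Plane, AttainsMaxDispersion (PkRegion k) G → 2 * k - 2 ≤ G.card := by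
  refine ⟨fun G hG ⟨g, hg, hjunc⟩ => not_dispersionAtLeast_of_isMiddleJunction hk hG hg hjunc,
    fun G ⟨hG, hmax⟩ => card_ge_of_dispersionAtLeast hk hG ?_⟩
  exact dispersionAtLeast_iff.2 <| (dispersionAtLeast_iff.1 (dispersionAtLeast_guardsPk hk)).trans
    (hmax _ (isGuardSet_guardsPk hk))

end DispersiveAGP
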